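/- arXiv:2511.15149 — 4 statements merged into one kernel-verified Lean document; each statement's English description precedes it below -/
import Mathlib

section
/- Let n ≥ 1 be a natural number, let z be a complex number with Re(z) > 0, and let u, v be complex numbers with u ∈ 𝔻 and v^n ∈ 𝔻'. Then F(z/n; u, v^n) = ∑_{α^n = 1} F(z; u, vα), where the sum runs over all n-th roots of unity α. -/
open Complex MeasureTheory Polynomial

/-- `t^z := exp(z · log t)` with `log t` the real logarithm. -/
noncomputable def tpow (z : ℂ) (t : ℝ) : ℂ := Complex.exp (z * Real.log t)

/-- The Herglotz–Zagier–Novikov function `F(z;u,v) = ∫₀¹ log(1 − u t^z)/(v⁻¹ − t) dt`. -/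
noncomputable def F (z u v : ℂ) : ℂ :=
  ∫ t in (0:ℝ)..1, Complex.log (1 - u * tpow z t) / (v⁻¹ - (t : ℂ))

/-!
Substituting `t = s ^ n` turns `t ^ (z / n)` into `s ^ z` and `dt / (v⁻ⁿ - t)` into
`n s ^ (n - 1) ds / (v⁻ⁿ - s ^ n)`. The partial fraction decomposition
`n s ^ (n - 1) / (v⁻ⁿ - s ^ n) = ∑_{αⁿ = 1} 1 / ((v α)⁻¹ - s)` (minus the logarithmic
derivative of `s ^ n - v⁻ⁿ = ∏ (s - (v α)⁻¹)`) then splits the integral into the `n` integrals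
on the right. Splitting is legitimate because each of them converges: `|log (1 - u t ^ z)|`
grows at most like `-log (1 - t)` as `t → 1`.
-/

section PartialFractions

variable {K : Type*} [Field K] {ζ : K} {n : ℕ}

theorem IsPrimitiveRoot.sum_inv_sub_nthRootsFinset (hζ : IsPrimitiveRoot ζ n) {x : K}
    (hx : x ^ n ≠ 1) :
    ∑ α ∈ nthRootsFinset n (1 : K), (x - α)⁻¹ = n * x ^ (n - 1) / (x ^ n - 1) := by
  have hn : 0 < n := Nat.pos_of_ne_zero fun h => hx (by simp [h])
  have hprod := X_pow_sub_one_eq_prod hn hζ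
  have hsplits : Splits (X ^ n - 1 : K[X]) := by
    rw [hprod]
    exact Splits.multisetProd (by simp [Splits.X_sub_C])
  have hlogDeriv := hsplits.eval_derivative_div_eval_of_ne_zero (x := x)
    (by simpa [sub_eq_zero] using hx)
  rw [hprod, roots_prod_X_sub_C, ← hprod] at hlogDeriv
  simp only [derivative_sub, derivative_X_pow, derivative_one, sub_zero, eval_mul, eval_C,
    eval_pow, eval_X, eval_sub, eval_one, one_div] at hlogDeriv
  rw [hlogDeriv, Finset.sum_eq_multiset_sum]

theorem sum_nthRootsFinset_one_comp_inv {M : Type*} [AddCommMonoid M] (hn : 0 < n) (f : K → M) :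
    ∑ α ∈ nthRootsFinset n (1 : K), f α⁻¹ = ∑ α ∈ nthRootsFinset n (1 : K), f α :=
  Finset.sum_equiv (Equiv.inv K) (by simp [mem_nthRootsFinset hn, inv_pow]) fun _ _ => rfl

theorem IsPrimitiveRoot.sum_inv_mul_inv_sub (hζ : IsPrimitiveRoot ζ n) {v s : K} (hv : v ≠ 0)
    (hs : (v ^ n)⁻¹ ≠ s ^ n) :
    ∑ α ∈ nthRootsFinset n (1 : K), ((v * α)⁻¹ - s)⁻¹ = n * s ^ (n - 1) / ((v ^ n)⁻¹ - s ^ n) := by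
  have hvs : (v * s) ^ n ≠ 1 := fun h =>
    hs (eq_inv_of_mul_eq_one_right (by rwa [mul_pow] at h)).symm
  have hn : n ≠ 0 := fun h => hvs (by simp [h])
  have hterm : ∀ α : K, ((v * α⁻¹)⁻¹ - s)⁻¹ = -v * (v * s - α)⁻¹ := by
    intro α
    rw [mul_inv, inv_inv, show v⁻¹ * α - s = -(v * s - α) * v⁻¹ by field_simp; ring, mul_inv,
      inv_inv, inv_neg, neg_mul, neg_mul, mul_comm]
  rw [← sum_nthRootsFinset_one_comp_inv (Nat.pos_of_ne_zero hn),
    Finset.sum_congr rfl fun α _ => hterm α, ← Finset.mul_sum,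
    hζ.sum_inv_sub_nthRootsFinset hvs]
  have h1 : (v * s) ^ n - 1 ≠ 0 := sub_ne_zero.mpr hvs
  have h2 : 1 - v ^ n * s ^ n ≠ 0 := by rw [← mul_pow]; exact sub_ne_zero.mpr hvs.symm
  obtain ⟨m, rfl⟩ := Nat.exists_eq_add_one_of_ne_zero hn
  rw [Nat.add_sub_cancel, ← mul_div_assoc, div_eq_div_iff h1 (sub_ne_zero.mpr hs)]
  field_simp
  ring

end PartialFractions

theorem image_pow_Ioc_zero_one {n : ℕ} (hn : n ≠ 0) :
    (fun s : ℝ => s ^ n) '' Set.Ioc 0 1 = Set.Ioc 0 1 := by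
  refine Set.Subset.antisymm ?_ fun t ht => ⟨t ^ (n⁻¹ : ℝ), ⟨Real.rpow_pos_of_pos ht.1 _,
    Real.rpow_le_one ht.1.le ht.2 (by positivity)⟩, Real.rpow_inv_natCast_pow ht.1.le hn⟩
  rintro _ ⟨s, hs, rfl⟩
  exact ⟨pow_pos hs.1 n, pow_le_one₀ hs.1.le hs.2⟩

theorem intervalIntegral.integral_zero_one_eq_integral_pow_smul {E : Type*}
    [NormedAddCommGroup E] [NormedSpace ℝ E] {n : ℕ} (hn : n ≠ 0) (g : ℝ → E) :
    ∫ t in (0 : ℝ)..1, g t = ∫ s in (0 : ℝ)..1, ((n : ℝ) * s ^ (n - 1)) • g (s ^ n) := by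
  have hsubst := integral_image_eq_integral_abs_deriv_smul
    (measurableSet_Ioc (a := (0 : ℝ)) (b := 1))
    (fun s _ => (hasDerivAt_pow n s).hasDerivWithinAt)
    (fun a ha b hb => (pow_left_inj₀ ha.1.le hb.1.le hn).mp) g
  rw [image_pow_Ioc_zero_one hn] at hsubst
  rw [intervalIntegral.integral_of_le zero_le_one, intervalIntegral.integral_of_le zero_le_one,
    hsubst]
  refine setIntegral_congr_fun measurableSet_Ioc fun s hs => ?_
  rw [abs_of_nonneg (by have := hs.1.le; positivity)]

theorem min_one_mul_one_sub_le_one_sub_rpow {r t : ℝ} (hr : 0 < r) (ht0 : 0 ≤ t) (ht1 : t ≤ 1) :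
    min r 1 * (1 - t) ≤ 1 - t ^ r := by
  rcases le_total r 1 with h | h
  · have := rpow_one_add_le_one_add_mul_self (s := t - 1) (by linarith) hr.le h
    rw [add_sub_cancel] at this
    rw [min_eq_left h]
    linarith
  · have : t ^ r ≤ t ^ (1 : ℝ) := Real.rpow_le_rpow_of_exponent_ge' ht0 ht1 zero_le_one h
    rw [min_eq_right h, Real.rpow_one] at *
    linarith

theorem abs_log_le_log_sub_log {a b x : ℝ} (ha : 0 < a) (ha1 : a ≤ 1) (hb1 : 1 ≤ b)
    (hax : a ≤ x) (hxb : x ≤ b) : |Real.log x| ≤ Real.log b - Real.log a := by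
  have h1 := Real.log_le_log ha hax
  have h2 := Real.log_le_log (ha.trans_le hax) hxb
  have h3 := Real.log_nonpos ha.le ha1
  have h4 := Real.log_nonneg hb1
  exact abs_le.mpr ⟨by linarith, by linarith⟩

theorem Complex.norm_log_le_abs_log_norm_add_pi (w : ℂ) :
    ‖Complex.log w‖ ≤ |Real.log ‖w‖| + Real.pi :=
  calc ‖Complex.log w‖ ≤ |(Complex.log w).re| + |(Complex.log w).im| :=
        norm_le_abs_re_add_abs_im _
    _ ≤ |Real.log ‖w‖| + Real.pi := by
      rw [Complex.log_re, Complex.log_im]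
      exact add_le_add_right (Complex.abs_arg_le_pi w) _

theorem norm_tpow (z : ℂ) {t : ℝ} (ht : 0 < t) : ‖tpow z t‖ = t ^ z.re := by
  rw [tpow, Complex.norm_exp, Real.rpow_def_of_pos ht, mul_comm]
  simp

theorem norm_log_one_sub_mul_tpow_le {z u : ℂ} (hz : 0 < z.re) (hu : ‖u‖ ≤ 1) {t : ℝ}
    (ht0 : 0 < t) (ht1 : t < 1) :
    ‖Complex.log (1 - u * tpow z t)‖
      ≤ (Real.pi + Real.log 2 - Real.log (min z.re 1)) - Real.log (1 - t) := by
  have hc : 0 < min z.re 1 := lt_min hz one_pos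
  have hut : ‖u * tpow z t‖ ≤ t ^ z.re := by
    rw [norm_mul, norm_tpow z ht0]
    exact mul_le_of_le_one_left (by positivity) hu
  have hlow : min z.re 1 * (1 - t) ≤ ‖1 - u * tpow z t‖ :=
    calc min z.re 1 * (1 - t) ≤ 1 - t ^ z.re :=
          min_one_mul_one_sub_le_one_sub_rpow hz ht0.le ht1.le
      _ ≤ 1 - ‖u * tpow z t‖ := by linarith
      _ ≤ ‖1 - u * tpow z t‖ := by simpa using norm_sub_norm_le (1 : ℂ) (u * tpow z t)
  have hhigh : ‖1 - u * tpow z t‖ ≤ 2 :=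
    calc ‖1 - u * tpow z t‖ ≤ 1 + ‖u * tpow z t‖ := by
          simpa using norm_sub_le (1 : ℂ) (u * tpow z t)
      _ ≤ 2 := by linarith [Real.rpow_le_one ht0.le ht1.le hz.le]
  have habs := abs_log_le_log_sub_log (mul_pos hc (by linarith))
    (mul_le_one₀ (min_le_right _ _) (by linarith) (by linarith)) one_le_two hlow hhigh
  rw [Real.log_mul hc.ne' (by linarith)] at habs
  linarith [(1 - u * tpow z t).norm_log_le_abs_log_norm_add_pi]

theorem intervalIntegrable_log_one_sub_mul_tpow {z u : ℂ} (hz : 0 < z.re) (hu : ‖u‖ ≤ 1) :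
    IntervalIntegrable (fun t : ℝ => Complex.log (1 - u * tpow z t)) volume 0 1 := by
  have hlog : IntervalIntegrable (fun t : ℝ => Real.log (1 - t)) volume 0 1 := by
    simpa using (intervalIntegral.intervalIntegrable_log' (a := 1) (b := 0)).comp_sub_left 1
  have hbound :=
    (intervalIntegrable_const (c := Real.pi + Real.log 2 - Real.log (min z.re 1))).sub hlog
  rw [intervalIntegrable_iff_integrableOn_Ioo_of_le zero_le_one] at hbound ⊢
  refine hbound.mono'
    (Complex.measurable_log.comp (by unfold tpow; fun_prop)).aestronglyMeasurable ?_
  filter_upwards [ae_restrict_mem measurableSet_Ioo] with t ht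
  exact norm_log_one_sub_mul_tpow_le hz hu ht.1 ht.2

/-- The paper's `𝔻' = 𝔻 \ {1}`. -/
def diskPrime : Set ℂ := {w | w ≠ 0 ∧ ‖w‖ ≤ 1 ∧ w ≠ 1}

theorem inv_sub_ofReal_ne_zero {w : ℂ} (hw : w ∈ diskPrime) {t : ℝ}
    (ht : t ∈ Set.Icc (0 : ℝ) 1) : w⁻¹ - t ≠ 0 := by
  obtain ⟨hw0, hw1, hw2⟩ := hw
  intro h
  rw [sub_eq_zero] at h
  have ht1 : t = 1 := by
    have hnorm : ‖w‖⁻¹ = t := by rw [← norm_inv, h, Complex.norm_real, Real.norm_of_nonneg ht.1]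
    exact le_antisymm ht.2 (hnorm ▸ (one_le_inv₀ (norm_pos_iff.mpr hw0)).mpr hw1)
  exact hw2 (inv_eq_one.mp (by rw [h, ht1, Complex.ofReal_one]))

theorem mul_mem_diskPrime_of_mem_nthRootsFinset {n : ℕ} {v α : ℂ} (hv : v ^ n ∈ diskPrime)
    (hα : α ∈ nthRootsFinset n (1 : ℂ)) : v * α ∈ diskPrime := by
  obtain ⟨hv0, hv1, hv2⟩ := hv
  have hn : n ≠ 0 := fun h => hv2 (by simp [h])
  have hαn : α ^ n = 1 := (mem_nthRootsFinset (Nat.pos_of_ne_zero hn) 1).mp hα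
  have hvα : ‖v * α‖ = ‖v‖ := by rw [norm_mul, Complex.norm_eq_one_of_pow_eq_one hαn hn, mul_one]
  refine ⟨mul_ne_zero (fun h => hv0 (by simp [h, hn]))
    (ne_zero_of_mem_nthRootsFinset one_ne_zero hα), ?_, fun h => hv2 ?_⟩
  · rw [hvα]
    exact (pow_le_one_iff_of_nonneg (norm_nonneg v) hn).mp (by rwa [← norm_pow])
  · simpa [mul_pow, hαn] using congrArg (· ^ n) h

noncomputable def F.integrand (z u w : ℂ) (t : ℝ) : ℂ :=
  Complex.log (1 - u * tpow z t) / (w⁻¹ - t)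

theorem F.intervalIntegrable_integrand {z u w : ℂ} (hz : 0 < z.re) (hu : ‖u‖ ≤ 1)
    (hw : w ∈ diskPrime) : IntervalIntegrable (F.integrand z u w) volume 0 1 := by
  unfold F.integrand
  simp only [div_eq_mul_inv]
  refine (intervalIntegrable_log_one_sub_mul_tpow hz hu).mul_continuousOn ?_
  refine (by fun_prop : Continuous fun t : ℝ => w⁻¹ - t).continuousOn.inv₀ fun t ht => ?_
  rw [Set.uIcc_of_le zero_le_one] at ht
  exact inv_sub_ofReal_ne_zero hw ht

theorem tpow_div_natCast_pow {n : ℕ} (hn : n ≠ 0) (z : ℂ) (s : ℝ) :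
    tpow (z / n) (s ^ n) = tpow z s := by
  rw [tpow, tpow, Real.log_pow]
  congr 1
  push_cast
  field_simp

theorem F.pow_smul_integrand_eq_sum {n : ℕ} {z u v : ℂ} (hv : v ^ n ∈ diskPrime) {s : ℝ}
    (hs : s ∈ Set.Icc (0 : ℝ) 1) :
    ((n : ℝ) * s ^ (n - 1)) • F.integrand (z / n) u (v ^ n) (s ^ n)
      = ∑ α ∈ nthRootsFinset n (1 : ℂ), F.integrand z u (v * α) s := by
  have hn : n ≠ 0 := fun h => hv.2.2 (by simp [h])
  have hv0 : v ≠ 0 := fun h => hv.1 (by simp [h, hn])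
  have hden : (v ^ n)⁻¹ ≠ (s : ℂ) ^ n := by
    have := inv_sub_ofReal_ne_zero hv ⟨pow_nonneg hs.1 n, pow_le_one₀ hs.1 hs.2⟩
    push_cast at this
    exact sub_ne_zero.mp this
  rw [F.integrand, tpow_div_natCast_pow hn]
  simp only [F.integrand, div_eq_mul_inv, ← Finset.mul_sum,
    (Complex.isPrimitiveRoot_exp n hn).sum_inv_mul_inv_sub hv0 hden, Complex.real_smul]
  push_cast
  ring

theorem statement1_general (n : ℕ) (z u v : ℂ) (hz : 0 < z.re)
    (hu1 : ‖u‖ ≤ 1)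
    (hvn0 : v ^ n ≠ 0) (hvn1 : ‖v ^ n‖ ≤ 1) (hvn2 : v ^ n ≠ 1) :
    F (z / (n : ℂ)) u (v ^ n) = ∑ α ∈ nthRootsFinset n (1 : ℂ), F z u (v * α) := by
  have hv : v ^ n ∈ diskPrime := ⟨hvn0, hvn1, hvn2⟩
  have hn : n ≠ 0 := fun h => hvn2 (by simp [h])
  calc F (z / n) u (v ^ n)
      = ∫ s in (0 : ℝ)..1, ((n : ℝ) * s ^ (n - 1)) • F.integrand (z / n) u (v ^ n) (s ^ n) :=
        intervalIntegral.integral_zero_one_eq_integral_pow_smul hn _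
    _ = ∫ s in (0 : ℝ)..1, ∑ α ∈ nthRootsFinset n (1 : ℂ), F.integrand z u (v * α) s :=
        intervalIntegral.integral_congr fun s hs =>
          F.pow_smul_integrand_eq_sum hv (by rwa [Set.uIcc_of_le zero_le_one] at hs)
    _ = ∑ α ∈ nthRootsFinset n (1 : ℂ), F z u (v * α) :=
        intervalIntegral.integral_finsetSum fun α hα =>
          F.intervalIntegrable_integrand hz hu1 (mul_mem_diskPrime_of_mem_nthRootsFinset hv hα)

theorem statement1 (n : ℕ) (hn : 1 ≤ n) (z u v : ℂ) (hz : 0 < z.re)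
    (hu0 : u ≠ 0) (hu1 : ‖u‖ ≤ 1)
    (hvn0 : v ^ n ≠ 0) (hvn1 : ‖v ^ n‖ ≤ 1) (hvn2 : v ^ n ≠ 1) :
    F (z / (n : ℂ)) u (v ^ n) = ∑ α ∈ nthRootsFinset n (1 : ℂ), F z u (v * α) :=
  statement1_general n z u v hz hu1 hvn0 hvn1 hvn2
end

section
/- Let z be a complex number with Re(z) > 0 and let u, v, w be nonzero complex numbers with |u| < 1, |v| < 1, and |w| < 1. Then F(z;u,v,w) = ∑_{m=1}^∞ ∑_{n=1}^∞ ∑_{k=1}^∞ u^m w^n v^k / (m·n·(mz + nz + k)). -/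
/-!
For `0 < t ≤ 1` we have `‖t^z‖ ≤ 1`, so the Taylor series of `-log (1 - u t^z)` and
`-log (1 - w t^z)` and the geometric series `(v⁻¹ - t)⁻¹ = ∑ v^(k+1) t^k` converge absolutely;
their product expands the integrand into a triple series of terms `c_{mnk} t^(e_{mnk})` with
`e_{mnk} = (m+1) z + (n+1) z + k`. These terms are bounded on `(0,1]` by the summable constants
`‖u‖^(m+1) ‖w‖^(n+1) ‖v‖^(k+1)`, so dominated convergence allows termwise integration, and
`∫₀¹ t^e dt = 1 / (e + 1)`.
-/

open Complex MeasureTheory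

/-- `F(z;u,v,w) = ∫₀¹ log(1 − u t^z) log(1 − w t^z)/(v⁻¹ − t) dt`. -/
noncomputable def F3 (z u v w : ℂ) : ℂ :=
  ∫ t in (0:ℝ)..1,
    Complex.log (1 - u * tpow z t) * Complex.log (1 - w * tpow z t) / (v⁻¹ - (t : ℂ))

theorem HasSum.mul_of_summable_norm {ι κ R : Type*} [NormedRing R] [CompleteSpace R]
    {f : ι → R} {g : κ → R} {a b : R} (hf : HasSum f a) (hg : HasSum g b)
    (hf' : Summable fun i => ‖f i‖) (hg' : Summable fun j => ‖g j‖) :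
    HasSum (fun x : ι × κ => f x.1 * g x.2) (a * b) :=
  hf.mul hg (summable_mul_of_summable_norm hf' hg')

theorem summable_pow_succ {r : ℝ} (h0 : 0 ≤ r) (h1 : r < 1) :
    Summable fun n : ℕ => r ^ (n + 1) :=
  (summable_nat_add_iff 1).2 (summable_geometric_of_lt_one h0 h1)

theorem summable_pow_succ_triple {a b c : ℝ} (ha0 : 0 ≤ a) (hb0 : 0 ≤ b) (hc0 : 0 ≤ c)
    (ha : a < 1) (hb : b < 1) (hc : c < 1) :
    Summable fun p : ℕ × ℕ × ℕ => a ^ (p.1 + 1) * (b ^ (p.2.1 + 1) * c ^ (p.2.2 + 1)) :=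
  (summable_pow_succ ha0 ha).mul_of_nonneg
    ((summable_pow_succ hb0 hb).mul_of_nonneg (summable_pow_succ hc0 hc)
      (fun _ => by positivity) (fun _ => by positivity))
    (fun _ => by positivity) (fun _ => by positivity)

theorem summable_norm_pow_succ_div {x : ℂ} (hx : ‖x‖ < 1) :
    Summable fun n : ℕ => ‖x ^ (n + 1) / (n + 1)‖ := by
  refine (summable_pow_succ (norm_nonneg x) hx).of_nonneg_of_le (fun _ => norm_nonneg _) ?_
  intro n
  rw [norm_div, norm_pow]
  exact div_le_self (by positivity) (by norm_cast; simp)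

theorem hasSum_mul_geometric {K : Type*} [NormedField K] [CompleteSpace K] {v x : K}
    (hv0 : v ≠ 0) (hvx : ‖v * x‖ < 1) :
    HasSum (fun k : ℕ => v * (v * x) ^ k) (v⁻¹ - x)⁻¹ := by
  have hfactor : v⁻¹ - x = v⁻¹ * (1 - v * x) := by
    rw [mul_sub, inv_mul_cancel_left₀ hv0, mul_one]
  rw [hfactor, mul_inv, inv_inv]
  exact (hasSum_geometric_of_norm_lt_one hvx).mul_left v

theorem norm_tpow_le_one {z : ℂ} (hz : 0 ≤ z.re) {t : ℝ} (ht0 : 0 < t) (ht1 : t ≤ 1) :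
    ‖tpow z t‖ ≤ 1 := by
  rw [tpow, norm_exp, re_mul_ofReal]
  exact Real.exp_le_one_iff.2 (mul_nonpos_of_nonneg_of_nonpos hz (Real.log_nonpos ht0.le ht1))

theorem tpow_eq_cpow (z : ℂ) {t : ℝ} (ht : 0 < t) : tpow z t = (t : ℂ) ^ z := by
  rw [tpow, cpow_def_of_ne_zero (ofReal_ne_zero.2 ht.ne'), ← ofReal_log ht.le, mul_comm]

theorem integral_tpow {z : ℂ} (hz : -1 < z.re) : ∫ t in (0 : ℝ)..1, tpow z t = 1 / (z + 1) := by
  have hne : z + 1 ≠ 0 := by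
    intro h
    have := congrArg re h
    simp only [add_re, one_re, zero_re] at this
    linarith
  rw [intervalIntegral.integral_congr_ae (g := fun t : ℝ => (t : ℂ) ^ z)
      (Filter.Eventually.of_forall fun t ht => tpow_eq_cpow z (by simpa using ht.1)),
    integral_cpow (Or.inl hz)]
  simp [zero_cpow hne]

theorem tpow_add (a b : ℂ) (t : ℝ) : tpow (a + b) t = tpow a t * tpow b t := by
  simp only [tpow, add_mul, exp_add]

theorem tpow_natCast_mul (n : ℕ) (z : ℂ) (t : ℝ) : tpow (n * z) t = tpow z t ^ n := by
  rw [tpow, tpow, mul_assoc, exp_nat_mul]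

theorem tpow_natCast (n : ℕ) {t : ℝ} (ht : 0 < t) : tpow n t = (t : ℂ) ^ n := by
  rw [← mul_one (n : ℂ), tpow_natCast_mul, tpow, one_mul, ← ofReal_exp, Real.exp_log ht]

theorem measurable_tpow (z : ℂ) : Measurable (tpow z) := by
  unfold tpow; fun_prop

namespace F3

noncomputable def coeff (u v w : ℂ) (p : ℕ × ℕ × ℕ) : ℂ :=
  u ^ (p.1 + 1) * w ^ (p.2.1 + 1) * v ^ (p.2.2 + 1) / (((p.1 : ℂ) + 1) * ((p.2.1 : ℂ) + 1))

noncomputable def exponent (z : ℂ) (p : ℕ × ℕ × ℕ) : ℂ :=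
  ((p.1 : ℂ) + 1) * z + ((p.2.1 : ℂ) + 1) * z + p.2.2

variable {z u v w : ℂ}

theorem re_exponent_nonneg (hz : 0 ≤ z.re) (p : ℕ × ℕ × ℕ) : 0 ≤ (exponent z p).re := by
  simp only [exponent, add_re, natCast_re, one_re, mul_re, add_im, natCast_im,
    one_im, add_zero, zero_mul, sub_zero]
  positivity

theorem norm_coeff_le (u v w : ℂ) (p : ℕ × ℕ × ℕ) :
    ‖coeff u v w p‖ ≤ ‖u‖ ^ (p.1 + 1) * (‖w‖ ^ (p.2.1 + 1) * ‖v‖ ^ (p.2.2 + 1)) := by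
  rw [coeff, norm_div, norm_mul, norm_mul, norm_mul, norm_pow, norm_pow, norm_pow, ← mul_assoc]
  refine div_le_self (by positivity) (one_le_mul_of_one_le_of_one_le ?_ ?_) <;>
    · norm_cast; simp

theorem tpow_exponent {t : ℝ} (ht : 0 < t) (m n k : ℕ) :
    tpow (exponent z (m, n, k)) t = tpow z t ^ (m + 1) * tpow z t ^ (n + 1) * (t : ℂ) ^ k := by
  simp only [exponent, tpow_add, tpow_natCast k ht, ← tpow_natCast_mul]
  push_cast
  rfl

theorem integral_coeff_mul_tpow (hz : 0 ≤ z.re) (p : ℕ × ℕ × ℕ) :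
    ∫ t in (0 : ℝ)..1, coeff u v w p * tpow (exponent z p) t =
      coeff u v w p / (exponent z p + 1) := by
  rw [intervalIntegral.integral_const_mul,
    integral_tpow (by linarith [re_exponent_nonneg hz p]), mul_one_div]

theorem hasSum_coeff_mul_tpow (hz : 0 ≤ z.re) (hv0 : v ≠ 0)
    (hu : ‖u‖ < 1) (hv : ‖v‖ < 1) (hw : ‖w‖ < 1) {t : ℝ} (ht0 : 0 < t) (ht1 : t ≤ 1) :
    HasSum (fun p => coeff u v w p * tpow (exponent z p) t)
      (log (1 - u * tpow z t) * log (1 - w * tpow z t) / (v⁻¹ - t)) := by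
  set s := tpow z t
  have hs : ‖s‖ ≤ 1 := norm_tpow_le_one hz ht0 ht1
  have ht : ‖(t : ℂ)‖ ≤ 1 := by rwa [norm_real, Real.norm_of_nonneg ht0.le]
  have norm_mul_lt_one {x y : ℂ} (hx : ‖x‖ < 1) (hy : ‖y‖ ≤ 1) : ‖x * y‖ < 1 := by
    rw [norm_mul]; exact (mul_le_of_le_one_right (norm_nonneg x) hy).trans_lt hx
  have hvt := norm_mul_lt_one hv ht
  have hC_norm : Summable fun k : ℕ => ‖v * (v * t) ^ k‖ := by
    simpa only [norm_mul, norm_pow] using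
      (summable_norm_geometric_of_norm_lt_one hvt).mul_left ‖v‖
  have hB_norm := summable_norm_pow_succ_div (norm_mul_lt_one hw hs)
  have hBC := (hasSum_taylorSeries_neg_log' (norm_mul_lt_one hw hs)).mul_of_summable_norm
    (hasSum_mul_geometric hv0 hvt) hB_norm hC_norm
  have hBC_norm := hB_norm.mul_norm hC_norm
  have hABC := (hasSum_taylorSeries_neg_log' (norm_mul_lt_one hu hs)).mul_of_summable_norm hBC
    (summable_norm_pow_succ_div (norm_mul_lt_one hu hs)) hBC_norm
  rw [show log (1 - u * s) * log (1 - w * s) / (v⁻¹ - t) =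
      -log (1 - u * s) * (-log (1 - w * s) * (v⁻¹ - t)⁻¹) by ring]
  refine hABC.congr_fun fun ⟨m, n, k⟩ => ?_
  rw [tpow_exponent ht0]
  simp only [coeff]
  field_simp
  ring

theorem hasSum_integral_coeff_mul_tpow (hz : 0 ≤ z.re) (hv0 : v ≠ 0)
    (hu : ‖u‖ < 1) (hv : ‖v‖ < 1) (hw : ‖w‖ < 1) :
    HasSum (fun p => ∫ t in (0 : ℝ)..1, coeff u v w p * tpow (exponent z p) t) (F3 z u v w) := by
  refine intervalIntegral.hasSum_integral_of_dominated_convergence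
    (fun p _ => ‖u‖ ^ (p.1 + 1) * (‖w‖ ^ (p.2.1 + 1) * ‖v‖ ^ (p.2.2 + 1)))
    (fun p => ?_) (fun p => ?_) (.of_forall fun _ _ =>
      summable_pow_succ_triple (norm_nonneg u) (norm_nonneg w) (norm_nonneg v) hu hw hv)
    intervalIntegrable_const (.of_forall fun t ht => ?_)
  · exact (measurable_tpow _).const_mul _ |>.aestronglyMeasurable
  · refine .of_forall fun t ht => ?_
    rw [Set.uIoc_of_le zero_le_one] at ht
    rw [norm_mul]
    exact mul_le_of_le_one_right (norm_nonneg _) (norm_tpow_le_one (re_exponent_nonneg hz p)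
      ht.1 ht.2) |>.trans (norm_coeff_le u v w p)
  · rw [Set.uIoc_of_le zero_le_one] at ht
    exact hasSum_coeff_mul_tpow hz hv0 hu hv hw ht.1 ht.2

end F3

open F3 in
theorem statement3_general (z u v w : ℂ) (hz : 0 < z.re) (hv0 : v ≠ 0)
    (hu : ‖u‖ < 1) (hv : ‖v‖ < 1) (hw : ‖w‖ < 1) :
    F3 z u v w = ∑' m : ℕ, ∑' n : ℕ, ∑' k : ℕ,
      u ^ (m + 1) * w ^ (n + 1) * v ^ (k + 1) /
        (((m : ℂ) + 1) * ((n : ℂ) + 1) *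
          (((m : ℂ) + 1) * z + ((n : ℂ) + 1) * z + ((k : ℂ) + 1))) := by
  have hsum := hasSum_integral_coeff_mul_tpow hz.le hv0 hu hv hw
  simp only [integral_coeff_mul_tpow hz.le] at hsum
  rw [← hsum.tsum_eq, hsum.summable.tsum_prod]
  refine tsum_congr fun m => ?_
  rw [(hsum.summable.prod_factor m).tsum_prod]
  refine tsum_congr fun n => tsum_congr fun k => ?_
  rw [coeff, exponent, div_div, add_assoc]

theorem statement3 (z u v w : ℂ) (hz : 0 < z.re)
    (hu0 : u ≠ 0) (hv0 : v ≠ 0) (hw0 : w ≠ 0)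
    (hu : ‖u‖ < 1) (hv : ‖v‖ < 1) (hw : ‖w‖ < 1) :
    F3 z u v w = ∑' m : ℕ, ∑' n : ℕ, ∑' k : ℕ,
      u ^ (m + 1) * w ^ (n + 1) * v ^ (k + 1) /
        (((m : ℂ) + 1) * ((n : ℂ) + 1) *
          (((m : ℂ) + 1) * z + ((n : ℂ) + 1) * z + ((k : ℂ) + 1))) :=
  statement3_general z u v w hz hv0 hu hv hw
end

section
/- Let p, q ≥ 1 be natural numbers and let u, v, w be complex numbers with u, w ∈ 𝔻 and v ∈ 𝔻'. Fix complex numbers ζ_u, ζ_w with ζ_u^p = u and ζ_w^p = w, and ζ_v with ζ_v^q = v, such that αζ_v ∈ 𝔻' for every q-th root of unity α. Then F(p/q; u, v, w) = ∑_{α^q=1} ∑_{β^p=1} ∑_{γ^p=1} F(1; ζ_u·β, ζ_v·α, ζ_w·γ), where the sums run over all q-th (respectively p-th) roots of unity. -/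
/-!
Substituting `t = s ^ q` turns `F(p/q; u, v, w)` into an integral over `(0, 1)` of
`q s^(q-1) log(1 - ζu^p s^p) log(1 - ζw^p s^p) / (ζv^(-q) - s^q)`. Summing a power series
`∑ a_m (β x)^m` over the `n`-th roots of unity `β` keeps exactly the terms of degree divisible
by `n`. For `-log(1 - z)` and `1/(1 - z)` this factors `log(1 - x^n) = ∑_β log(1 - β x)` and gives
the partial fraction expansion `q s^(q-1) / (ζ^(-q) - s^q) = ∑_α 1 / ((ζ α)⁻¹ - s)`. Multiplying
out, the integrand becomes a triple sum of integrands of `F(1; ζu β, ζv α, ζw γ)`. Each of these is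
integrable, since the logarithms grow only like `(1 - s)^(-1/4)` and the denominator stays away
from zero, so the sum may be taken out of the integral.
-/

open Complex MeasureTheory Polynomial

open Set

section RootsOfUnity

variable {n : ℕ}

lemma norm_eq_one_of_mem_nthRootsFinset (hn : 0 < n) {β : ℂ}
    (hβ : β ∈ nthRootsFinset n (1 : ℂ)) : ‖β‖ = 1 :=
  norm_eq_one_of_pow_eq_one ((mem_nthRootsFinset hn 1).1 hβ) hn.ne'

lemma card_nthRootsFinset_one (hn : 0 < n) : (nthRootsFinset n (1 : ℂ)).card = n :=
  (isPrimitiveRoot_exp n hn.ne').card_nthRootsFinset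

lemma sum_nthRootsFinset_pow (hn : 0 < n) (k : ℕ) :
    ∑ β ∈ nthRootsFinset n (1 : ℂ), β ^ k = if n ∣ k then (n : ℂ) else 0 := by
  obtain ⟨ζ, hζ⟩ : ∃ ζ : ℂ, IsPrimitiveRoot ζ n := ⟨_, isPrimitiveRoot_exp n hn.ne'⟩
  split_ifs with hdvd
  · obtain ⟨m, rfl⟩ := hdvd
    rw [Finset.sum_congr rfl fun β hβ ↦ by rw [pow_mul, (mem_nthRootsFinset hn 1).1 hβ, one_pow],
      Finset.sum_const, card_nthRootsFinset_one hn, nsmul_one]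
  · have hζ0 : ζ ≠ 0 := hζ.ne_zero hn.ne'
    have hmem {c : ℂ} (hc : c ^ n = 1) {β : ℂ} (hβ : β ∈ nthRootsFinset n (1 : ℂ)) :
        c * β ∈ nthRootsFinset n (1 : ℂ) :=
      by simpa using mul_mem_nthRootsFinset ((mem_nthRootsFinset hn 1).2 hc) hβ
    -- multiplication by `ζ` permutes the roots, while `ζ ^ k ≠ 1`
    have hshift : ζ ^ k * ∑ β ∈ nthRootsFinset n (1 : ℂ), β ^ k =
        ∑ β ∈ nthRootsFinset n (1 : ℂ), β ^ k := by
      simp_rw [Finset.mul_sum, ← mul_pow]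
      exact Finset.sum_nbij' (ζ * ·) (ζ⁻¹ * ·) (fun β ↦ hmem hζ.pow_eq_one)
        (fun β ↦ hmem (by rw [inv_pow, hζ.pow_eq_one, inv_one]))
        (fun β _ ↦ by field_simp) (fun β _ ↦ by field_simp) (fun β _ ↦ rfl)
    by_contra hS
    exact hdvd ((hζ.pow_eq_one_iff_dvd k).1 ((mul_eq_right₀ hS).1 hshift))

theorem hasSum_sum_nthRootsFinset (hn : 0 < n) {a : ℕ → ℂ} {x : ℂ} {S : ℂ → ℂ}
    (h : ∀ β ∈ nthRootsFinset n (1 : ℂ), HasSum (fun m ↦ a m * (β * x) ^ m) (S β)) :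
    HasSum (fun k ↦ n * a (n * k) * x ^ (n * k)) (∑ β ∈ nthRootsFinset n (1 : ℂ), S β) := by
  have hsum := hasSum_sum h
  simp_rw [mul_pow, ← mul_assoc, mul_right_comm _ _ (x ^ _), ← Finset.mul_sum,
    sum_nthRootsFinset_pow hn, mul_ite, mul_zero] at hsum
  rw [← (mul_right_injective₀ hn.ne' : Function.Injective (n * ·)).hasSum_iff] at hsum
  · refine hsum.congr_fun fun k ↦ ?_
    simp only [Function.comp_apply, dvd_mul_right, if_true]
    ring
  · rintro m hm
    rw [if_neg]
    rintro ⟨k, rfl⟩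
    exact hm ⟨k, rfl⟩

lemma norm_mul_of_mem_nthRootsFinset (hn : 0 < n) {β : ℂ} (hβ : β ∈ nthRootsFinset n (1 : ℂ))
    (x : ℂ) : ‖β * x‖ = ‖x‖ := by
  rw [norm_mul, norm_eq_one_of_mem_nthRootsFinset hn hβ, one_mul]

theorem sum_log_one_sub_nthRootsFinset_mul (hn : 0 < n) {x : ℂ} (hx : ‖x‖ < 1) :
    ∑ β ∈ nthRootsFinset n (1 : ℂ), log (1 - β * x) = log (1 - x ^ n) := by
  have hx' : ‖x ^ n‖ < 1 := by rw [norm_pow]; exact pow_lt_one₀ (norm_nonneg x) hx hn.ne'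
  have hsum := hasSum_sum_nthRootsFinset hn (a := fun m ↦ (m : ℂ)⁻¹)
    (S := fun β ↦ -log (1 - β * x)) fun β hβ ↦ by
      simpa only [div_eq_inv_mul] using
        hasSum_taylorSeries_neg_log ((norm_mul_of_mem_nthRootsFinset hn hβ x).trans_lt hx)
  have hsum' : HasSum (fun k : ℕ ↦ n * (↑(n * k) : ℂ)⁻¹ * x ^ (n * k)) (-log (1 - x ^ n)) := by
    refine (hasSum_taylorSeries_neg_log hx').congr_fun fun k ↦ ?_
    rcases k.eq_zero_or_pos with rfl | hk
    · simp
    · have : (n : ℂ) ≠ 0 := Nat.cast_ne_zero.2 hn.ne'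
      push_cast
      field_simp
      ring
  rw [Finset.sum_neg_distrib] at hsum
  exact neg_injective (hsum.unique hsum')

theorem sum_inv_one_sub_nthRootsFinset_mul (hn : 0 < n) {x : ℂ} (hx : ‖x‖ < 1) :
    ∑ β ∈ nthRootsFinset n (1 : ℂ), (1 - β * x)⁻¹ = n * (1 - x ^ n)⁻¹ := by
  have hx' : ‖x ^ n‖ < 1 := by rw [norm_pow]; exact pow_lt_one₀ (norm_nonneg x) hx hn.ne'
  have hsum := hasSum_sum_nthRootsFinset hn (a := fun _ ↦ 1)
    (S := fun β ↦ (1 - β * x)⁻¹) fun β hβ ↦ by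
      simpa only [one_mul] using hasSum_geometric_of_norm_lt_one
        ((norm_mul_of_mem_nthRootsFinset hn hβ x).trans_lt hx)
  refine hsum.unique ?_
  simpa only [mul_one, pow_mul] using (hasSum_geometric_of_norm_lt_one hx').mul_left (n : ℂ)

theorem sum_inv_inv_mul_nthRootsFinset_sub (hn : 0 < n) {ζ s : ℂ} (hζ : ζ ≠ 0) (hs : s ≠ 0)
    (hζs : ‖ζ * s‖ < 1) :
    ∑ α ∈ nthRootsFinset n (1 : ℂ), ((ζ * α)⁻¹ - s)⁻¹ =
      n * s ^ (n - 1) * ((ζ ^ n)⁻¹ - s ^ n)⁻¹ := by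
  have hne {y : ℂ} (hy : ‖y‖ < 1) : 1 - y ≠ 0 := fun h ↦ by
    rw [sub_eq_zero] at h; simp [← h] at hy
  have hterm : ∀ α ∈ nthRootsFinset n (1 : ℂ),
      ((ζ * α)⁻¹ - s)⁻¹ = s⁻¹ * ((1 - α * (ζ * s))⁻¹ - 1) := fun α hα' ↦ by
    have hα : α ≠ 0 := ne_zero_of_mem_nthRootsFinset one_ne_zero hα'
    have h1 : 1 - ζ * α * s ≠ 0 := by
      simpa only [mul_left_comm α, mul_assoc] using
        hne ((norm_mul_of_mem_nthRootsFinset hn hα' (ζ * s)).trans_lt hζs)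
    rw [mul_left_comm α, ← mul_assoc]
    field_simp
    ring
  rw [Finset.sum_congr rfl hterm, ← Finset.mul_sum, Finset.sum_sub_distrib,
    sum_inv_one_sub_nthRootsFinset_mul hn hζs, Finset.sum_const, card_nthRootsFinset_one hn,
    nsmul_one]
  have := hne (by rw [norm_pow]; exact pow_lt_one₀ (norm_nonneg _) hζs hn.ne' : ‖(ζ * s) ^ n‖ < 1)
  have hy : (ζ * s) ^ n ≠ 0 := pow_ne_zero _ (mul_ne_zero hζ hs)
  obtain ⟨m, rfl⟩ : ∃ m, n = m + 1 := ⟨n - 1, by omega⟩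
  rw [Nat.add_sub_cancel, show ζ ^ (m + 1) = (ζ * s) ^ (m + 1) / (s ^ m * s) by
    rw [mul_pow, pow_succ s, mul_div_cancel_right₀ _ (by positivity)]]
  generalize (ζ * s) ^ (m + 1) = y at *
  rw [show (y / (s ^ m * s))⁻¹ - s ^ (m + 1) = s ^ m * s * (1 - y) / y by field_simp; ring]
  field_simp
  ring

end RootsOfUnity

section LogBounds

variable {a : ℂ} {s : ℝ}

lemma norm_mul_ofReal_le (ha : ‖a‖ ≤ 1) (hs0 : 0 ≤ s) : ‖a * s‖ ≤ s := by
  rw [norm_mul, norm_real, Real.norm_of_nonneg hs0]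
  exact mul_le_of_le_one_left hs0 ha

lemma norm_one_sub_mul_ofReal_mem_Icc (ha : ‖a‖ ≤ 1) (hs0 : 0 ≤ s) (hs1 : s ≤ 1) :
    ‖1 - a * s‖ ∈ Icc (1 - s) 2 := by
  have has := norm_mul_ofReal_le ha hs0
  constructor
  · linarith [norm_sub_norm_le (1 : ℂ) (a * s), norm_one (α := ℂ)]
  · linarith [norm_sub_le (1 : ℂ) (a * s), norm_one (α := ℂ)]

lemma one_sub_mul_ofReal_mem_slitPlane (ha : ‖a‖ ≤ 1) (hs0 : 0 ≤ s) (hs1 : s < 1) :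
    1 - a * s ∈ slitPlane := by
  simpa only [sub_eq_add_neg] using mem_slitPlane_of_norm_lt_one
    ((norm_neg (a * s)).trans_le (norm_mul_ofReal_le ha hs0) |>.trans_lt hs1)

lemma abs_log_le_of_mem_Icc {c y : ℝ} (hc : 0 < c) (hc1 : c ≤ 1) (hy : y ∈ Icc c 2) :
    |Real.log y| ≤ Real.log 2 - Real.log c := by
  have hl2 : 0 ≤ Real.log 2 := Real.log_nonneg one_le_two
  have hlc : Real.log c ≤ 0 := Real.log_nonpos hc.le hc1
  rw [abs_le]
  constructor
  · linarith [Real.log_le_log hc hy.1]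
  · linarith [Real.log_le_log (hc.trans_le hy.1) hy.2]

lemma neg_log_le_four_mul_rpow {x : ℝ} (hx : 0 < x) : -Real.log x ≤ 4 * x ^ (-(1 / 4) : ℝ) := by
  have := Real.log_le_rpow_div (inv_nonneg.2 hx.le) (by norm_num : (0:ℝ) < 1 / 4)
  rw [Real.log_inv, Real.inv_rpow hx.le, ← Real.rpow_neg hx.le] at this
  linarith

lemma norm_log_one_sub_mul_ofReal_le (ha : ‖a‖ ≤ 1) (hs0 : 0 ≤ s) (hs1 : s < 1) :
    ‖log (1 - a * s)‖ ≤ 8 * (1 - s) ^ (-(1 / 4) : ℝ) := by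
  have h1s : 0 < 1 - s := by linarith
  have hz := norm_one_sub_mul_ofReal_mem_Icc ha hs0 hs1.le
  have hr : 1 ≤ (1 - s) ^ (-(1 / 4) : ℝ) :=
    Real.one_le_rpow_of_pos_of_le_one_of_nonpos h1s (by linarith) (by norm_num)
  calc ‖log (1 - a * s)‖ ≤ |(log (1 - a * s)).re| + |(log (1 - a * s)).im| :=
        norm_le_abs_re_add_abs_im _
    _ ≤ (Real.log 2 - Real.log (1 - s)) + Real.pi := by
        rw [log_re, log_im]
        exact add_le_add (abs_log_le_of_mem_Icc h1s (by linarith) hz) (abs_arg_le_pi _)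
    _ ≤ 8 * (1 - s) ^ (-(1 / 4) : ℝ) := by
        linarith [neg_log_le_four_mul_rpow h1s, Real.pi_lt_d2, Real.log_two_lt_d9]

end LogBounds

lemma integrableOn_one_sub_rpow_Ioo {r : ℝ} (hr : -1 < r) :
    IntegrableOn (fun s : ℝ ↦ (1 - s) ^ r) (Ioo 0 1) := by
  have := (intervalIntegral.intervalIntegrable_rpow' hr (a := 0) (b := 1)).comp_sub_left 1
  simp only [sub_zero, sub_self] at this
  exact this.symm.1.mono_set Ioo_subset_Ioc_self

lemma continuousOn_log_one_sub_mul_ofReal {a : ℂ} (ha : ‖a‖ ≤ 1) :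
    ContinuousOn (fun s : ℝ ↦ log (1 - a * s)) (Ioo 0 1) :=
  (continuous_const.sub (continuous_const.mul continuous_ofReal)).continuousOn.clog
    fun _ hs ↦ one_sub_mul_ofReal_mem_slitPlane ha hs.1.le hs.2

lemma integrableOn_log_one_sub_mul_mul_log_one_sub_mul {a b : ℂ} (ha : ‖a‖ ≤ 1) (hb : ‖b‖ ≤ 1) :
    IntegrableOn (fun s : ℝ ↦ log (1 - a * s) * log (1 - b * s)) (Ioo 0 1) := by
  refine Integrable.mono'
    ((integrableOn_one_sub_rpow_Ioo (r := -(1 / 2)) (by norm_num)).const_mul 64)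
    (((continuousOn_log_one_sub_mul_ofReal ha).mul
      (continuousOn_log_one_sub_mul_ofReal hb)).aestronglyMeasurable measurableSet_Ioo) ?_
  refine (ae_restrict_iff' measurableSet_Ioo).2 (ae_of_all _ fun s hs ↦ ?_)
  have h1s : 0 < 1 - s := by linarith [hs.2]
  have hsq : (1 - s) ^ (-(1 / 2) : ℝ) = (1 - s) ^ (-(1 / 4) : ℝ) * (1 - s) ^ (-(1 / 4) : ℝ) := by
    rw [← Real.rpow_add h1s]; norm_num
  rw [norm_mul, hsq]
  calc _ ≤ (8 * (1 - s) ^ (-(1 / 4) : ℝ)) * (8 * (1 - s) ^ (-(1 / 4) : ℝ)) :=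
        mul_le_mul (norm_log_one_sub_mul_ofReal_le ha hs.1.le hs.2)
          (norm_log_one_sub_mul_ofReal_le hb hs.1.le hs.2) (norm_nonneg _) (by positivity)
    _ = _ := by ring

lemma inv_sub_ofReal_ne_zero_s11 {c : ℂ} (hc : c ≠ 0 ∧ ‖c‖ ≤ 1 ∧ c ≠ 1) {t : ℝ} (ht : t ∈ Icc 0 1) :
    c⁻¹ - t ≠ 0 := by
  obtain ⟨hc0, hc1, hc_one⟩ := hc
  intro h
  have hct : c * t = 1 := by rw [← sub_eq_zero.1 h, mul_inv_cancel₀ hc0]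
  have hnorm : ‖c‖ * t = 1 := by
    simpa [abs_of_nonneg ht.1] using congrArg norm hct
  have ht1 : t = 1 := le_antisymm ht.2 (hnorm ▸ mul_le_of_le_one_left ht.1 hc1)
  exact hc_one (by simpa [ht1] using hct)

lemma integrableOn_log_mul_log_div_inv_sub {a b c : ℂ} (ha : ‖a‖ ≤ 1) (hb : ‖b‖ ≤ 1)
    (hc : c ≠ 0 ∧ ‖c‖ ≤ 1 ∧ c ≠ 1) :
    IntegrableOn (fun s : ℝ ↦ log (1 - a * s) * log (1 - b * s) / (c⁻¹ - s)) (Ioo 0 1) := by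
  have hcont : ContinuousOn (fun s : ℝ ↦ (c⁻¹ - s)⁻¹) (Icc 0 1) :=
    (continuous_const.sub continuous_ofReal).continuousOn.inv₀
      fun t ht ↦ inv_sub_ofReal_ne_zero_s11 hc ht
  obtain ⟨M, hM⟩ := isCompact_Icc.exists_bound_of_continuousOn hcont
  simp only [div_eq_mul_inv]
  exact (integrableOn_log_one_sub_mul_mul_log_one_sub_mul ha hb).mul_bdd
    ((hcont.mono Ioo_subset_Icc_self).aestronglyMeasurable measurableSet_Ioo)
    ((ae_restrict_iff' measurableSet_Ioo).2 (ae_of_all _ fun s hs ↦ hM s (Ioo_subset_Icc_self hs)))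

lemma image_pow_Ioo_zero_one {n : ℕ} (hn : n ≠ 0) : (fun x : ℝ ↦ x ^ n) '' Ioo 0 1 = Ioo 0 1 := by
  ext y
  constructor
  · rintro ⟨x, hx, rfl⟩
    exact ⟨pow_pos hx.1 n, pow_lt_one₀ hx.1.le hx.2 hn⟩
  · intro hy
    refine ⟨y ^ (n⁻¹ : ℝ), ⟨Real.rpow_pos_of_pos hy.1 _, ?_⟩, Real.rpow_inv_natCast_pow hy.1.le hn⟩
    exact Real.rpow_lt_one hy.1.le hy.2 (by positivity)

lemma setIntegral_Ioo_zero_one_comp_pow {E : Type*} [NormedAddCommGroup E] [NormedSpace ℝ E]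
    {n : ℕ} (hn : n ≠ 0) (g : ℝ → E) :
    ∫ t in Ioo (0 : ℝ) 1, g t = ∫ s in Ioo (0 : ℝ) 1, ((n : ℝ) * s ^ (n - 1)) • g (s ^ n) := by
  have hinj : InjOn (fun x : ℝ ↦ x ^ n) (Ioo 0 1) :=
    (pow_left_strictMonoOn₀ hn).injOn.mono fun x hx ↦ hx.1.le
  conv_lhs => rw [← image_pow_Ioo_zero_one hn]
  rw [integral_image_eq_integral_abs_deriv_smul measurableSet_Ioo
    (fun x _ ↦ (hasDerivAt_pow n x).hasDerivWithinAt) hinj]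
  refine setIntegral_congr_fun measurableSet_Ioo fun s hs ↦ ?_
  rw [abs_of_nonneg (by have := hs.1; positivity)]

lemma integral_finsetSum_sum_sum {X ι κ ν E : Type*} [MeasurableSpace X] [NormedAddCommGroup E]
    [NormedSpace ℝ E] {μ : Measure X} (A : Finset ι) (B : Finset κ) (C : Finset ν)
    {f : ι → κ → ν → X → E} (hf : ∀ i ∈ A, ∀ j ∈ B, ∀ k ∈ C, Integrable (f i j k) μ) :
    ∫ x, ∑ i ∈ A, ∑ j ∈ B, ∑ k ∈ C, f i j k x ∂μ =
      ∑ i ∈ A, ∑ j ∈ B, ∑ k ∈ C, ∫ x, f i j k x ∂μ := by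
  rw [integral_finsetSum _ fun i hi ↦ integrable_finsetSum _ fun j hj ↦
    integrable_finsetSum _ fun k hk ↦ hf i hi j hj k hk]
  refine Finset.sum_congr rfl fun i hi ↦ ?_
  rw [integral_finsetSum _ fun j hj ↦ integrable_finsetSum _ fun k hk ↦ hf i hi j hj k hk]
  exact Finset.sum_congr rfl fun j hj ↦ integral_finsetSum _ fun k hk ↦ hf i hi j hj k hk

lemma tpow_one {t : ℝ} (ht : 0 < t) : tpow 1 t = t := by
  rw [tpow, one_mul, ← ofReal_exp, Real.exp_log ht]

lemma tpow_div_natCast_pow_s11 (p : ℕ) {q : ℕ} (hq : q ≠ 0) {s : ℝ} (hs : 0 < s) :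
    tpow (p / q) (s ^ q) = s ^ p := by
  have hq' : (q : ℂ) ≠ 0 := Nat.cast_ne_zero.2 hq
  rw [tpow, Real.log_pow, ofReal_mul, ofReal_natCast,
    show (p : ℂ) / q * (q * Real.log s) = p * Real.log s by field_simp, exp_nat_mul, ← ofReal_exp,
    Real.exp_log hs]

lemma F3_eq_setIntegral (z u v w : ℂ) :
    F3 z u v w = ∫ t in Ioo 0 1, log (1 - u * tpow z t) * log (1 - w * tpow z t) / (v⁻¹ - t) := by
  rw [F3, intervalIntegral.integral_of_le zero_le_one, integral_Ioc_eq_integral_Ioo]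

lemma F3_one_eq_setIntegral (a c b : ℂ) :
    F3 1 a c b = ∫ s : ℝ in Ioo 0 1, log (1 - a * s) * log (1 - b * s) / (c⁻¹ - s) := by
  rw [F3_eq_setIntegral]
  exact setIntegral_congr_fun measurableSet_Ioo fun t ht ↦ by simp only [tpow_one ht.1]

lemma natCast_mul_pow_mul_log_mul_log_div_eq_sum {p q : ℕ} (hp : 0 < p) (hq : 0 < q) {a b c : ℂ}
    (ha : ‖a‖ ≤ 1) (hb : ‖b‖ ≤ 1) (hc0 : c ≠ 0) (hc : ‖c‖ ≤ 1) {s : ℝ} (hs : s ∈ Ioo 0 1) :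
    q * s ^ (q - 1) * (log (1 - a ^ p * s ^ p) * log (1 - b ^ p * s ^ p) / ((c ^ q)⁻¹ - s ^ q)) =
      ∑ α ∈ nthRootsFinset q (1 : ℂ), ∑ β ∈ nthRootsFinset p (1 : ℂ),
        ∑ γ ∈ nthRootsFinset p (1 : ℂ),
          log (1 - a * β * s) * log (1 - b * γ * s) / ((c * α)⁻¹ - s) := by
  have hlt {d : ℂ} (hd : ‖d‖ ≤ 1) : ‖d * s‖ < 1 := (norm_mul_ofReal_le hd hs.1.le).trans_lt hs.2
  have hlog {d : ℂ} (hd : ‖d‖ ≤ 1) : log (1 - d ^ p * s ^ p) =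
      ∑ β ∈ nthRootsFinset p (1 : ℂ), log (1 - d * β * s) := by
    rw [← mul_pow, ← sum_log_one_sub_nthRootsFinset_mul hp (hlt hd)]
    simp only [mul_left_comm _ d, mul_assoc]
  have hinv := sum_inv_inv_mul_nthRootsFinset_sub hq hc0 (ofReal_ne_zero.2 hs.1.ne') (hlt hc)
  calc _ = (∑ α ∈ nthRootsFinset q (1 : ℂ), ((c * α)⁻¹ - s)⁻¹) *
        ((∑ β ∈ nthRootsFinset p (1 : ℂ), log (1 - a * β * s)) *
          ∑ γ ∈ nthRootsFinset p (1 : ℂ), log (1 - b * γ * s)) := by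
        rw [hinv, ← hlog ha, ← hlog hb]; ring
    _ = _ := by simp_rw [Finset.sum_mul_sum, Finset.mul_sum, div_eq_inv_mul]

theorem statement11_general (p q : ℕ) (hp : 1 ≤ p) (hq : 1 ≤ q) (u v w ζu ζv ζw : ℂ)
    (hu : u ≠ 0 ∧ ‖u‖ ≤ 1)
    (hw : w ≠ 0 ∧ ‖w‖ ≤ 1)
    (hζu : ζu ^ p = u) (hζw : ζw ^ p = w) (hζv : ζv ^ q = v)
    (hαζ : ∀ α ∈ nthRootsFinset q (1 : ℂ),
      α * ζv ≠ 0 ∧ ‖α * ζv‖ ≤ 1 ∧ α * ζv ≠ 1) :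
    F3 ((p : ℂ) / (q : ℂ)) u v w =
      ∑ α ∈ nthRootsFinset q (1 : ℂ), ∑ β ∈ nthRootsFinset p (1 : ℂ), ∑ γ ∈ nthRootsFinset p (1 : ℂ),
        F3 1 (ζu * β) (ζv * α) (ζw * γ) := by
  subst hζu hζw hζv
  have hnorm {ζ : ℂ} (h : ‖ζ ^ p‖ ≤ 1) : ‖ζ‖ ≤ 1 :=
    (pow_le_one_iff_of_nonneg (norm_nonneg ζ) (by omega)).1 (norm_pow ζ p ▸ h)
  have hroot {ζ β : ℂ} (h : ‖ζ ^ p‖ ≤ 1) (hβ : β ∈ nthRootsFinset p (1 : ℂ)) : ‖ζ * β‖ ≤ 1 := by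
    rw [norm_mul, norm_eq_one_of_mem_nthRootsFinset hp hβ, mul_one]
    exact hnorm h
  obtain ⟨hζv0, hζv1, -⟩ : ζv ≠ 0 ∧ ‖ζv‖ ≤ 1 ∧ ζv ≠ 1 := by
    simpa using hαζ 1 (one_mem_nthRootsFinset hq)
  calc F3 _ _ _ _ = ∫ s : ℝ in Ioo 0 1,
        ∑ α ∈ nthRootsFinset q (1 : ℂ), ∑ β ∈ nthRootsFinset p (1 : ℂ),
          ∑ γ ∈ nthRootsFinset p (1 : ℂ),
            log (1 - ζu * β * s) * log (1 - ζw * γ * s) / ((ζv * α)⁻¹ - s) := by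
        rw [F3_eq_setIntegral, setIntegral_Ioo_zero_one_comp_pow (by omega : q ≠ 0)]
        refine setIntegral_congr_fun measurableSet_Ioo fun s hs ↦ ?_
        simp only [tpow_div_natCast_pow_s11 p (by omega : q ≠ 0) hs.1, real_smul]
        push_cast
        exact natCast_mul_pow_mul_log_mul_log_div_eq_sum hp hq (hnorm hu.2) (hnorm hw.2)
          hζv0 hζv1 hs
    _ = _ := by
        rw [integral_finsetSum_sum_sum _ _ _ fun α hα β hβ γ hγ ↦
          integrableOn_log_mul_log_div_inv_sub (hroot hu.2 hβ) (hroot hw.2 hγ)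
            (by simpa only [mul_comm α] using hαζ α hα)]
        simp_rw [F3_one_eq_setIntegral]

theorem statement11 (p q : ℕ) (hp : 1 ≤ p) (hq : 1 ≤ q) (u v w ζu ζv ζw : ℂ)
    (hu : u ≠ 0 ∧ ‖u‖ ≤ 1)
    (hw : w ≠ 0 ∧ ‖w‖ ≤ 1)
    (hv : v ≠ 0 ∧ ‖v‖ ≤ 1 ∧ v ≠ 1)
    (hζu : ζu ^ p = u) (hζw : ζw ^ p = w) (hζv : ζv ^ q = v)
    (hαζ : ∀ α ∈ nthRootsFinset q (1 : ℂ),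
      α * ζv ≠ 0 ∧ ‖α * ζv‖ ≤ 1 ∧ α * ζv ≠ 1) :
    F3 ((p : ℂ) / (q : ℂ)) u v w =
      ∑ α ∈ nthRootsFinset q (1 : ℂ), ∑ β ∈ nthRootsFinset p (1 : ℂ), ∑ γ ∈ nthRootsFinset p (1 : ℂ),
        F3 1 (ζu * β) (ζv * α) (ζw * γ) :=
  statement11_general p q hp hq u v w ζu ζv ζw hu hw hζu hζw hζv hαζ
end

section
/- Let k ≥ 1 be a natural number and let u ∈ 𝔻' be a complex number. Then F_k(1; u, u) = ∫₀¹ log^k(1 − u·t)/(u^{−1} − t) dt = −(1/(k+1))·log^{k+1}(1 − u). Moreover, for arbitrary u, v ∈ ℂ \ ([1,∞) ∪ {0}) with u ≠ v, assuming that the numbers v(u−1)/(u−v) and v/(v−u) lie in the open unit disc and that 1−u does not lie on the nonpositive real axis, one has F_k(1; u, v) = ∑_{j=1}^{k+1} (−1)^{j−1} · (k!/(k+1−j)!) · log^{k+1−j}(1−u) · Li_j(v(u−1)/(u−v)) + (−1)^{k+1} · k! · Li_{k+1}(v/(v−u)). -/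
/-!
Both identities are the fundamental theorem of calculus on `[0, 1]` with `L t = log (1 - u t)`,
`L' = -u / (1 - u t)`. For `v = u` the integrand is `-L^k L'`, with primitive `-L^(k+1) / (k+1)`.
In general `ζ t = v (u t - 1) / (u - v)` is affine in `t`, runs from `v / (v - u)` to
`v (u - 1) / (u - v)` and so stays in the unit disc, and `ζ' = ζ L'`. Hence
`(Li (m+1) ∘ ζ)' = (Li m ∘ ζ) L'`, and repeated integration by parts shows that
`∑ i ≤ k, (-1)^i k!/(k-i)! L^(k-i) Li (i+1) ∘ ζ` is a primitive of
`L^k (Li 0 ∘ ζ) L' = L^k / (v⁻¹ - t)`. At `t = 0` only the term `i = k` survives, as `L 0 = 0`.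
-/

open Complex MeasureTheory

/-- `F_k(1;u,v) = ∫₀¹ log^k(1 − u t)/(v⁻¹ − t) dt`. -/
noncomputable def Fk1 (k : ℕ) (u v : ℂ) : ℂ :=
  ∫ t in (0:ℝ)..1, (Complex.log (1 - u * (t : ℂ))) ^ k / (v⁻¹ - (t : ℂ))

/-- The polylogarithm `Li_s(z) = ∑_{n≥1} z^n / n^s`. -/
noncomputable def Li (s : ℕ) (z : ℂ) : ℂ := ∑' n : ℕ, z ^ (n + 1) / ((n : ℂ) + 1) ^ s

open Set

section Polylog

variable {z : ℂ}

theorem norm_div_natCast_add_one_pow_le (w : ℂ) (n s : ℕ) : ‖w / ((n : ℂ) + 1) ^ s‖ ≤ ‖w‖ := by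
  rw [norm_div, norm_pow]
  refine div_le_self (norm_nonneg w) (one_le_pow₀ ?_)
  rw [← Nat.cast_add_one, Complex.norm_natCast]
  exact_mod_cast Nat.le_add_left 1 n

theorem summable_Li_terms (s : ℕ) (hz : ‖z‖ < 1) :
    Summable fun n : ℕ => z ^ (n + 1) / ((n : ℂ) + 1) ^ s :=
  .of_norm_bounded ((summable_geometric_of_lt_one (norm_nonneg z) hz).comp_injective
    (add_left_injective 1)) fun n => (norm_div_natCast_add_one_pow_le _ n s).trans_eq (norm_pow z _)

theorem Li_eq_mul_tsum (s : ℕ) (z : ℂ) : Li s z = z * ∑' n : ℕ, z ^ n / ((n : ℂ) + 1) ^ s := by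
  rw [Li, ← tsum_mul_left]
  exact tsum_congr fun n => by ring

theorem Li_zero (hz : ‖z‖ < 1) : Li 0 z = z / (1 - z) := by
  rw [Li_eq_mul_tsum]
  simp only [pow_zero, div_one]
  rw [tsum_geometric_of_norm_lt_one hz, div_eq_mul_inv]

theorem hasDerivAt_Li_succ (s : ℕ) (hz : ‖z‖ < 1) :
    HasDerivAt (Li (s + 1)) (∑' n : ℕ, z ^ n / ((n : ℂ) + 1) ^ s) z := by
  obtain ⟨r, hzr, hr1⟩ := exists_between hz
  have hr0 : 0 ≤ r := (norm_nonneg z).trans hzr.le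
  have hz_ball : z ∈ Metric.ball (0 : ℂ) r := mem_ball_zero_iff.mpr hzr
  refine hasDerivAt_tsum_of_isPreconnected
    (g := fun (n : ℕ) w => w ^ (n + 1) / ((n : ℂ) + 1) ^ (s + 1))
    (g' := fun n w => w ^ n / ((n : ℂ) + 1) ^ s)
    (summable_geometric_of_lt_one hr0 hr1) Metric.isOpen_ball (convex_ball 0 r).isPreconnected
    (fun n w _ => ?_) (fun n w hw => ?_) hz_ball (summable_Li_terms _ hz) hz_ball
  · have hn : (n : ℂ) + 1 ≠ 0 := Nat.cast_add_one_ne_zero n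
    refine ((hasDerivAt_pow (n + 1) w).div_const (((n : ℂ) + 1) ^ (s + 1))).congr_deriv ?_
    rw [Nat.add_sub_cancel, pow_succ]
    push_cast
    field_simp
  · rw [mem_ball_zero_iff] at hw
    exact (norm_div_natCast_add_one_pow_le _ n s).trans ((norm_pow w n).trans_le
      (pow_le_pow_left₀ (norm_nonneg w) hw.le n))

theorem HasDerivAt.Li_succ {𝕜 : Type*} [NontriviallyNormedField 𝕜] [NormedAlgebra 𝕜 ℂ]
    {Z : 𝕜 → ℂ} {L' : ℂ} {t : 𝕜} (hZ : HasDerivAt Z (Z t * L') t) (hZt : ‖Z t‖ < 1) (s : ℕ) :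
    HasDerivAt (fun x => Li (s + 1) (Z x)) (Li s (Z t) * L') t := by
  refine ((hasDerivAt_Li_succ s hZt).comp t hZ).congr_deriv ?_
  rw [Li_eq_mul_tsum]
  ring

end Polylog

theorem hasDerivAt_sum_descFactorial_mul_pow_mul {𝕜 𝔸 : Type*} [NontriviallyNormedField 𝕜]
    [NormedCommRing 𝔸] [NormedAlgebra 𝕜 𝔸] {L : 𝕜 → 𝔸} {L' : 𝔸} {P : ℕ → 𝕜 → 𝔸} {t : 𝕜}
    (hL : HasDerivAt L L' t) (hP : ∀ m, HasDerivAt (P (m + 1)) (P m t * L') t) (k m : ℕ) :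
    HasDerivAt (fun x => ∑ i ∈ Finset.range (k + 1),
        (-1) ^ i * (k.descFactorial i : 𝔸) * L x ^ (k - i) * P (m + i + 1) x)
      (L t ^ k * P m t * L') t := by
  induction k generalizing m with
  | zero => simpa using hP m
  | succ k ih =>
    have hsplit : (fun x => ∑ i ∈ Finset.range (k + 2),
          (-1) ^ i * ((k + 1).descFactorial i : 𝔸) * L x ^ (k + 1 - i) * P (m + i + 1) x) =
        fun x => L x ^ (k + 1) * P (m + 1) x - (k + 1 : 𝔸) * ∑ i ∈ Finset.range (k + 1),
          (-1) ^ i * (k.descFactorial i : 𝔸) * L x ^ (k - i) * P (m + 1 + i + 1) x := by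
      funext x
      rw [Finset.sum_range_succ', Finset.mul_sum, sub_eq_neg_add, ← Finset.sum_neg_distrib]
      congr 1
      · refine Finset.sum_congr rfl fun i _ => ?_
        rw [Nat.succ_descFactorial_succ, Nat.add_sub_add_right,
          show m + (i + 1) + 1 = m + 1 + i + 1 by ring]
        push_cast
        ring
      · simp
    rw [hsplit]
    refine (((hL.fun_pow (k + 1)).fun_mul (hP m)).fun_sub ((ih (m + 1)).const_mul _)).congr_deriv ?_
    push_cast
    ring

theorem sum_Icc_one_eq_sum_range {M : Type*} [AddCommMonoid M] (n : ℕ) (f : ℕ → M) :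
    ∑ j ∈ Finset.Icc 1 n, f j = ∑ i ∈ Finset.range n, f (i + 1) := by
  rw [Finset.range_eq_Ico, Finset.sum_Ico_add', ← Finset.Ico_add_one_right_eq_Icc]

theorem cast_descFactorial_eq_div {K : Type*} [Field K] [CharZero K] {n k : ℕ} (h : k ≤ n) :
    (n.descFactorial k : K) = n.factorial / (n - k).factorial := by
  rw [eq_div_iff (by exact_mod_cast (n - k).factorial_ne_zero), mul_comm]
  exact_mod_cast Nat.factorial_mul_descFactorial h

theorem one_sub_mem_slitPlane {z : ℂ} (h : ¬(z.im = 0 ∧ 1 ≤ z.re)) : 1 - z ∈ slitPlane := by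
  rw [mem_slitPlane_iff, sub_re, one_re, sub_im, one_im, sub_pos, zero_sub, neg_ne_zero]
  by_contra! h'
  exact h ⟨h'.2, h'.1⟩

theorem one_sub_mem_slitPlane_of_norm_le_one {z : ℂ} (h1 : ‖z‖ ≤ 1) (hz : z ≠ 1) :
    1 - z ∈ slitPlane :=
  one_sub_mem_slitPlane fun ⟨him, hre⟩ =>
    hz (Complex.ext (le_antisymm ((re_le_norm z).trans h1) hre) him)

section UnitInterval

variable {u v : ℂ} {t : ℝ}

theorem one_sub_mul_mem_slitPlane (hu : 1 - u ∈ slitPlane) (ht : t ∈ Icc (0 : ℝ) 1) :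
    1 - u * t ∈ slitPlane := by
  have := starConvex_one_slitPlane.add_smul_mem (y := -u) (by rwa [← sub_eq_add_neg]) ht.1 ht.2
  simpa [sub_eq_add_neg, Complex.real_smul, mul_comm] using this

theorem inv_sub_ofReal_ne_zero_s19 (hv0 : v ≠ 0) (hv : 1 - v ∈ slitPlane) (ht : t ∈ Icc (0 : ℝ) 1) :
    v⁻¹ - t ≠ 0 := by
  rw [show v⁻¹ - t = v⁻¹ * (1 - v * t) by field_simp]
  exact mul_ne_zero (inv_ne_zero hv0) (slitPlane_ne_zero (one_sub_mul_mem_slitPlane hv ht))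

theorem hasDerivAt_log_one_sub_mul (h : 1 - u * t ∈ slitPlane) :
    HasDerivAt (fun x : ℝ => log (1 - u * x)) (-u / (1 - u * t)) t := by
  have : HasDerivAt (fun x : ℝ => 1 - u * x) (-u) t := by
    simpa using ((hasDerivAt_id t).ofReal_comp.const_mul u).const_sub 1
  exact this.clog_real h

theorem Fk1_eq_sub_of_hasDerivAt {k : ℕ} (hu : 1 - u ∈ slitPlane) (hv0 : v ≠ 0)
    (hv : 1 - v ∈ slitPlane) {G : ℝ → ℂ}
    (hG : ∀ t ∈ Icc (0 : ℝ) 1, HasDerivAt G (log (1 - u * t) ^ k / (v⁻¹ - t)) t) :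
    Fk1 k u v = G 1 - G 0 := by
  have hcont : ContinuousOn (fun t : ℝ => log (1 - u * t) ^ k / (v⁻¹ - t)) (Icc 0 1) :=
    ((ContinuousOn.clog (by fun_prop) fun t ht => one_sub_mul_mem_slitPlane hu ht).pow k).div
      (by fun_prop) fun t ht => inv_sub_ofReal_ne_zero_s19 hv0 hv ht
  rw [Fk1, intervalIntegral.integral_eq_sub_of_hasDerivAt (by rwa [uIcc_of_le zero_le_one])
    (hcont.intervalIntegrable_of_Icc zero_le_one)]

theorem Fk1_self (k : ℕ) (hu0 : u ≠ 0) (hu : 1 - u ∈ slitPlane) :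
    Fk1 k u u = -(1 / ((k : ℂ) + 1)) * log (1 - u) ^ (k + 1) := by
  rw [Fk1_eq_sub_of_hasDerivAt hu hu0 hu
    (G := fun t => -(1 / ((k : ℂ) + 1)) * log (1 - u * t) ^ (k + 1))]
  · simp
  intro t ht
  have hslit := one_sub_mul_mem_slitPlane hu ht
  have hne := slitPlane_ne_zero hslit
  refine (((hasDerivAt_log_one_sub_mul hslit).fun_pow (k + 1)).const_mul _).congr_deriv ?_
  have hk : (k : ℂ) + 1 ≠ 0 := Nat.cast_add_one_ne_zero k
  rw [Nat.add_sub_cancel]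
  push_cast
  field_simp

theorem norm_mul_sub_one_div_lt_one (huv : u ≠ v) (h0 : ‖v / (v - u)‖ < 1)
    (h1 : ‖v * (u - 1) / (u - v)‖ < 1) (ht : t ∈ Icc (0 : ℝ) 1) :
    ‖v * (u * t - 1) / (u - v)‖ < 1 := by
  have hmem := (convex_ball (0 : ℂ) 1).add_smul_sub_mem (mem_ball_zero_iff.2 h0)
    (mem_ball_zero_iff.2 h1) ht
  have huv' : u - v ≠ 0 := sub_ne_zero.2 huv
  have hvu' : v - u ≠ 0 := sub_ne_zero.2 huv.symm
  rw [mem_ball_zero_iff, Complex.real_smul] at hmem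
  rwa [show v * (u * t - 1) / (u - v) = v / (v - u) + t * (v * (u - 1) / (u - v) - v / (v - u)) by
    field_simp
    ring]

noncomputable def Fk1Primitive (k : ℕ) (u v : ℂ) (t : ℝ) : ℂ :=
  ∑ i ∈ Finset.range (k + 1), (-1) ^ i * (k.descFactorial i : ℂ) *
    log (1 - u * t) ^ (k - i) * Li (i + 1) (v * (u * t - 1) / (u - v))

theorem hasDerivAt_Fk1Primitive (k : ℕ) (hv0 : v ≠ 0) (huv : u ≠ v) (hu : 1 - u * t ∈ slitPlane)
    (hZ : ‖v * (u * t - 1) / (u - v)‖ < 1) :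
    HasDerivAt (Fk1Primitive k u v) (log (1 - u * t) ^ k / (v⁻¹ - t)) t := by
  have huv' : u - v ≠ 0 := sub_ne_zero.2 huv
  have hne : 1 - u * t ≠ 0 := slitPlane_ne_zero hu
  have hZd : HasDerivAt (fun x : ℝ => v * (u * x - 1) / (u - v))
      (v * (u * t - 1) / (u - v) * (-u / (1 - u * t))) t := by
    refine ((((hasDerivAt_id t).ofReal_comp.const_mul u).sub_const 1).const_mul v
      |>.div_const (u - v)).congr_deriv ?_
    push_cast
    field_simp
    ring
  have hsum := hasDerivAt_sum_descFactorial_mul_pow_mul (hasDerivAt_log_one_sub_mul hu)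
    (P := fun m (x : ℝ) => Li m (v * (u * x - 1) / (u - v))) (fun m => hZd.Li_succ hZ m) k 0
  simp only [zero_add] at hsum
  refine hsum.congr_deriv ?_
  have h1Z_eq : 1 - v * (u * t - 1) / (u - v) = u * (1 - v * t) / (u - v) := by
    field_simp
    ring
  have h1Z : u * (1 - v * t) / (u - v) ≠ 0 := by
    rw [← h1Z_eq, sub_ne_zero]
    rintro h
    simp [← h] at hZ
  have hu0 : u ≠ 0 := left_ne_zero_of_mul (left_ne_zero_of_mul h1Z)
  have h1vt : 1 - v * t ≠ 0 := right_ne_zero_of_mul (left_ne_zero_of_mul h1Z)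
  rw [Li_zero hZ, h1Z_eq]
  field_simp
  ring

end UnitInterval

theorem Fk1Primitive_one (k : ℕ) (u v : ℂ) :
    Fk1Primitive k u v 1 = ∑ j ∈ Finset.Icc 1 (k + 1),
      (-1 : ℂ) ^ (j - 1) * ((k.factorial : ℂ) / ((k + 1 - j).factorial : ℂ)) *
        (log (1 - u)) ^ (k + 1 - j) * Li j (v * (u - 1) / (u - v)) := by
  rw [Fk1Primitive, sum_Icc_one_eq_sum_range]
  refine Finset.sum_congr rfl fun i hi => ?_
  rw [cast_descFactorial_eq_div (Finset.mem_range_succ_iff.1 hi)]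
  simp

theorem Fk1Primitive_zero (k : ℕ) (u v : ℂ) :
    Fk1Primitive k u v 0 = (-1) ^ k * k.factorial * Li (k + 1) (v / (v - u)) := by
  rw [Fk1Primitive, Finset.sum_range_succ, Finset.sum_eq_zero fun i hi => ?_]
  · rw [show v * (u * (0 : ℝ) - 1) / (u - v) = v / (v - u) by
      rw [← neg_sub u v, div_neg]
      simp [neg_div]]
    simp [Nat.descFactorial_self]
  · simp [Nat.sub_ne_zero_of_lt (Finset.mem_range.1 hi)]

theorem Fk1_eq_sum_Li (k : ℕ) {u v : ℂ} (hu : 1 - u ∈ slitPlane) (hv0 : v ≠ 0)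
    (hv : 1 - v ∈ slitPlane) (huv : u ≠ v) (h1 : ‖v * (u - 1) / (u - v)‖ < 1)
    (h0 : ‖v / (v - u)‖ < 1) :
    Fk1 k u v =
      (∑ j ∈ Finset.Icc 1 (k + 1),
        (-1 : ℂ) ^ (j - 1) * ((k.factorial : ℂ) / ((k + 1 - j).factorial : ℂ)) *
          (log (1 - u)) ^ (k + 1 - j) * Li j (v * (u - 1) / (u - v)))
        + (-1 : ℂ) ^ (k + 1) * (k.factorial : ℂ) * Li (k + 1) (v / (v - u)) := by
  rw [Fk1_eq_sub_of_hasDerivAt hu hv0 hv fun t ht => hasDerivAt_Fk1Primitive k hv0 huv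
    (one_sub_mul_mem_slitPlane hu ht) (norm_mul_sub_one_div_lt_one huv h0 h1 ht),
    Fk1Primitive_one, Fk1Primitive_zero]
  ring

theorem statement19_general (k : ℕ) (u : ℂ)
    (hu : u ≠ 0 ∧ ‖u‖ ≤ 1 ∧ u ≠ 1) :
    Fk1 k u u = -(1 / ((k : ℂ) + 1)) * (Complex.log (1 - u)) ^ (k + 1) ∧
    (∀ u' v' : ℂ,
      u' ≠ 0 → ¬(u'.im = 0 ∧ 1 ≤ u'.re) →
      v' ≠ 0 → ¬(v'.im = 0 ∧ 1 ≤ v'.re) →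
      u' ≠ v' →
      ‖v' * (u' - 1) / (u' - v')‖ < 1 →
      ‖v' / (v' - u')‖ < 1 →
      ¬((1 - u').im = 0 ∧ (1 - u').re ≤ 0) →
      Fk1 k u' v' =
        (∑ j ∈ Finset.Icc 1 (k + 1),
          (-1 : ℂ) ^ (j - 1) * ((k.factorial : ℂ) / ((k + 1 - j).factorial : ℂ)) *
            (Complex.log (1 - u')) ^ (k + 1 - j) *
            Li j (v' * (u' - 1) / (u' - v')))
          + (-1 : ℂ) ^ (k + 1) * (k.factorial : ℂ) * Li (k + 1) (v' / (v' - u'))) := by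
  obtain ⟨hu0, hu_norm, hu1⟩ := hu
  refine ⟨Fk1_self k hu0 (one_sub_mem_slitPlane_of_norm_le_one hu_norm hu1), ?_⟩
  intro u' v' _ hu' hv0' hv' huv h1 h0 _
  exact Fk1_eq_sum_Li k (one_sub_mem_slitPlane hu') hv0' (one_sub_mem_slitPlane hv') huv h1 h0

theorem statement19 (k : ℕ) (hk : 1 ≤ k) (u : ℂ)
    (hu : u ≠ 0 ∧ ‖u‖ ≤ 1 ∧ u ≠ 1) :
    Fk1 k u u = -(1 / ((k : ℂ) + 1)) * (Complex.log (1 - u)) ^ (k + 1) ∧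
    (∀ u' v' : ℂ,
      u' ≠ 0 → ¬(u'.im = 0 ∧ 1 ≤ u'.re) →
      v' ≠ 0 → ¬(v'.im = 0 ∧ 1 ≤ v'.re) →
      u' ≠ v' →
      ‖v' * (u' - 1) / (u' - v')‖ < 1 →
      ‖v' / (v' - u')‖ < 1 →
      ¬((1 - u').im = 0 ∧ (1 - u').re ≤ 0) →
      Fk1 k u' v' =
        (∑ j ∈ Finset.Icc 1 (k + 1),
          (-1 : ℂ) ^ (j - 1) * ((k.factorial : ℂ) / ((k + 1 - j).factorial : ℂ)) *
            (Complex.log (1 - u')) ^ (k + 1 - j) *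
            Li j (v' * (u' - 1) / (u' - v')))
          + (-1 : ℂ) ^ (k + 1) * (k.factorial : ℂ) * Li (k + 1) (v' / (v' - u'))) :=
  statement19_general k u hu
end
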